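/- Let T be a triangulated category satisfying the octahedral axiom, P a connective class of objects closed under isomorphisms and finite direct sums containing 0, and I ⊆ P a subclass closed under isomorphisms and finite direct sums containing 0. Fix d ≥ 1 and set A^{(d+1)} := (P ∗ ΣP ∗ ⋯ ∗ Σ^{d+1}P) ∩ { X : Hom_T(X, Σ^m I') = 0 for all I' ∈ I, m ≥ 1 }. Then for X ∈ A^{(d+1)} the following are equivalent: (i) Hom_T(X, ΣY) = 0 for every Y ∈ A^{(d+1)}; (ii) there exist P' ∈ P and an object Z of T with P' ≅ X ⊕ Z, i.e. X is a direct summand of an object of P. -/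

import Mathlib

/-!
By the octahedral axiom every `X ∈ P ∗ ΣP ∗ ⋯ ∗ Σ^{d+1}P` has a `P`-cover, a distinguished
triangle `Y → P₀ → X → ΣY` with `P₀ ∈ P` and `Y ∈ P ∗ ⋯ ∗ Σ^d P`. Since `P` is connective and
`I ⊆ P`, both `P₀` and `X` lie in `ker Ext^{≥1}(-, I)`, which is closed under such cocones, so
`Y ∈ A^{(d+1)}`. If `X` is projective the connecting map `X → ΣY` vanishes, the triangle splits and
`P₀ ≅ X ⊕ Y`. Conversely, connectivity of `P` propagates along extensions to
`Hom(P, Σ^{≥1} A^{(d+1)}) = 0`, and this passes to direct summands of objects of `P`.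
-/

open CategoryTheory Limits Pretriangulated

universe v u

namespace AuslanderIyamaStmt3

variable {C : Type u} [Category.{v} C] [HasZeroObject C] [HasShift C ℤ] [Preadditive C]
  [∀ n : ℤ, (shiftFunctor C n).Additive] [Pretriangulated C] [HasBinaryBiproducts C]

/-- `S₁ ∗ S₂`: objects `Y` fitting in a distinguished triangle `X ⟶ Y ⟶ Z ⟶ X⟦1⟧`
with `X ∈ S₁` and `Z ∈ S₂`. -/
def star (S₁ S₂ : Set C) : Set C :=
  {Y | ∃ (X Z : C) (f : X ⟶ Y) (g : Y ⟶ Z) (h : Z ⟶ X⟦(1 : ℤ)⟧),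
    (Triangle.mk f g h ∈ distTriang C) ∧ X ∈ S₁ ∧ Z ∈ S₂}

/-- `Σⁿ S`, closed under isomorphism. -/
def shiftSet (n : ℤ) (S : Set C) : Set C :=
  {X | ∃ Y ∈ S, Nonempty (X ≅ Y⟦n⟧)}

/-- `V n = P ∗ ΣP ∗ ⋯ ∗ Σⁿ P` (associated to the left; by the octahedral axiom `∗` is
associative so the grouping is irrelevant). -/
def V (P : Set C) : ℕ → Set C
  | 0 => P
  | n + 1 => star (V P n) (shiftSet ((n : ℤ) + 1) P)

/-- The kernel class `{X : Hom(X, Σ^m I') = 0 for all I' ∈ I, m ≥ 1}`. -/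
def extKer (I : Set C) : Set C :=
  {X | ∀ I' ∈ I, ∀ m : ℤ, 1 ≤ m → ∀ f : X ⟶ I'⟦m⟧, f = 0}

end AuslanderIyamaStmt3

open scoped ZeroObject

namespace AuslanderIyamaStmt3

lemma eq_zero_of_iso {C : Type u} [Category.{v} C] [HasZeroMorphisms C] {A A' B B' : C}
    (eA : A ≅ A') (eB : B ≅ B') (h : ∀ f : A' ⟶ B', f = 0) (f : A ⟶ B) : f = 0 := by
  have := h (eA.inv ≫ f ≫ eB.hom)
  simpa using eA.hom ≫= this =≫ eB.inv

section Shift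

variable {C : Type u} [Category.{v} C] [HasShift C ℤ]

lemma shift_neg_one_mem_shiftSet {P : Set C} {k : ℤ} {Z : C} (hZ : Z ∈ shiftSet (k + 1) P) :
    Z⟦(-1 : ℤ)⟧ ∈ shiftSet k P := by
  obtain ⟨Q, hQ, ⟨e⟩⟩ := hZ
  exact ⟨Q, hQ, ⟨(shiftFunctor C (-1 : ℤ)).mapIso e ≪≫
    ((shiftFunctorAdd' C (k + 1) (-1) k (by ring)).app Q).symm⟩⟩

lemma hom_eq_zero_of_mem_shiftSet [HasZeroMorphisms C] {P : Set C} {Q : C} {k m : ℤ}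
    (h : ∀ Q' ∈ P, ∀ f : Q ⟶ Q'⟦k + m⟧, f = 0) {B : C} (hB : B ∈ shiftSet k P)
    (f : Q ⟶ B⟦m⟧) : f = 0 := by
  obtain ⟨Q', hQ', ⟨e⟩⟩ := hB
  exact eq_zero_of_iso (Iso.refl _) ((shiftFunctor C m).mapIso e ≪≫
    ((shiftFunctorAdd' C k m (k + m) rfl).app Q').symm) (h Q' hQ') f

variable [Preadditive C] [∀ n : ℤ, (shiftFunctor C n).Additive]

lemma eq_zero_of_shift_neg_one {A B : C} (h : ∀ f : A ⟶ B⟦(1 : ℤ)⟧, f = 0)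
    (g : A⟦(-1 : ℤ)⟧ ⟶ B) : g = 0 :=
  (shiftFunctor C (1 : ℤ)).map_eq_zero_iff.1
    (eq_zero_of_iso ((shiftFunctorCompIsoId C (-1 : ℤ) 1 (by norm_num)).app A) (Iso.refl _) h _)

end Shift

section Pretriangulated

variable {C : Type u} [Category.{v} C] [HasZeroObject C] [HasShift C ℤ] [Preadditive C]
  [∀ n : ℤ, (shiftFunctor C n).Additive] [Pretriangulated C]

lemma hom_eq_zero_of_mem_star {S₁ S₂ : Set C} {Q : C} {m : ℤ}
    (h₁ : ∀ A ∈ S₁, ∀ f : Q ⟶ A⟦m⟧, f = 0) (h₂ : ∀ B ∈ S₂, ∀ f : Q ⟶ B⟦m⟧, f = 0)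
    {Y : C} (hY : Y ∈ star S₁ S₂) (f : Q ⟶ Y⟦m⟧) : f = 0 := by
  obtain ⟨A, B, u, v, w, hT, hA, hB⟩ := hY
  obtain ⟨g, rfl⟩ := Triangle.coyoneda_exact₂ _ (Triangle.shift_distinguished _ hT m) f
    (h₂ B hB _)
  rw [h₁ A hA g]
  exact zero_comp

def IsConnective (P : Set C) : Prop :=
  ∀ ⦃X Y : C⦄, X ∈ P → Y ∈ P → ∀ n : ℤ, 1 ≤ n → ∀ f : X ⟶ Y⟦n⟧, f = 0

lemma hom_shift_eq_zero_of_mem_V {P : Set C} (hP : IsConnective P) {Q : C} (hQ : Q ∈ P)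
    {m : ℤ} (hm : 1 ≤ m) : ∀ (n : ℕ) {Y : C}, Y ∈ V P n → ∀ f : Q ⟶ Y⟦m⟧, f = 0
  | 0, _, hY, f => hP hQ hY m hm f
  | n + 1, _, hY, f =>
    hom_eq_zero_of_mem_star (fun _ hA ↦ hom_shift_eq_zero_of_mem_V hP hQ hm n hA)
      (fun _ hB ↦ hom_eq_zero_of_mem_shiftSet
        (fun _ hQ' ↦ hP hQ hQ' _ (by omega)) hB) hY f

lemma mem_extKer_of_distTriang {I : Set C} {Y P₀ X : C} {i : Y ⟶ P₀} {p : P₀ ⟶ X}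
    {δ : X ⟶ Y⟦(1 : ℤ)⟧} (hT : Triangle.mk i p δ ∈ distTriang C) (hP₀ : P₀ ∈ extKer I)
    (hX : X ∈ extKer I) : Y ∈ extKer I := by
  intro I' hI' m hm f
  have hX' : ∀ g : X ⟶ I'⟦m⟧⟦(1 : ℤ)⟧, g = 0 :=
    eq_zero_of_iso (Iso.refl _) ((shiftFunctorAdd' C m 1 (m + 1) rfl).app I').symm
      (hX I' hI' (m + 1) (by omega))
  obtain ⟨g, rfl⟩ := Triangle.yoneda_exact₂ _ (inv_rot_of_distTriang _ hT) f
    (eq_zero_of_shift_neg_one hX' _)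
  rw [hP₀ I' hI' m hm g]
  exact comp_zero

lemma mem_star_of_iso {S₁ S₂ : Set C} {Y Y' : C} (e : Y ≅ Y') (hY : Y ∈ star S₁ S₂) :
    Y' ∈ star S₁ S₂ := by
  obtain ⟨A, Z, f, g, h, hT, hA, hZ⟩ := hY
  refine ⟨A, Z, f ≫ e.hom, e.inv ≫ g, h, isomorphic_distinguished _ hT _ ?_, hA, hZ⟩
  exact Triangle.isoMk _ _ (Iso.refl _) e.symm (Iso.refl _)
    (by simp [Triangle.mk]) (by simp [Triangle.mk]) (by simp [Triangle.mk])

lemma mem_V_of_iso {P : Set C} (hP : ∀ ⦃X Y : C⦄, (X ≅ Y) → X ∈ P → Y ∈ P) :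
    ∀ (n : ℕ) {X Y : C}, (X ≅ Y) → X ∈ V P n → Y ∈ V P n
  | 0, _, _, e, hX => hP e hX
  | _ + 1, _, _, e, hX => mem_star_of_iso e hX

lemma V_subset_V_succ {P : Set C} (hP : ∀ ⦃X : C⦄, IsZero X → X ∈ P) (n : ℕ) :
    V P n ⊆ V P (n + 1) := fun W hW ↦
  ⟨W, 0, 𝟙 W, 0, 0, contractible_distinguished W, hW, 0, hP (isZero_zero C),
    ⟨(isZero_zero C).iso (Functor.map_isZero _ (isZero_zero C))⟩⟩

lemma shift_neg_one_mem_star {S₁ S₂ : Set C} {T : Triangle C} (hT : T ∈ distTriang C)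
    (h₁ : T.obj₁⟦(-1 : ℤ)⟧ ∈ S₁) (h₃ : T.obj₃⟦(-1 : ℤ)⟧ ∈ S₂) :
    T.obj₂⟦(-1 : ℤ)⟧ ∈ star S₁ S₂ :=
  ⟨_, _, _, _, _, Triangle.shift_distinguished _ hT (-1), h₁, h₃⟩

lemma exists_cover_of_mem_V_succ [IsTriangulated C] {P : Set C}
    (hP : ∀ ⦃X Y : C⦄, (X ≅ Y) → X ∈ P → Y ∈ P) :
    ∀ (n : ℕ) {X : C}, X ∈ V P (n + 1) →
      ∃ (Y P₀ : C) (i : Y ⟶ P₀) (p : P₀ ⟶ X) (δ : X ⟶ Y⟦(1 : ℤ)⟧),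
        Triangle.mk i p δ ∈ distTriang C ∧ P₀ ∈ P ∧ Y ∈ V P n
  | 0, X, ⟨W, Z, u, v, w, hT, hW, hZ⟩ => by
    obtain ⟨Q, hQ, ⟨e⟩⟩ := shift_neg_one_mem_shiftSet (k := 0) (by simpa using hZ)
    exact ⟨_, _, _, _, _, inv_rot_of_distTriang _ hT, hW,
      hP (e ≪≫ (shiftFunctorZero C ℤ).app Q).symm hQ⟩
  | n + 1, X, ⟨W, Z, u, v, w, hT, hW, hZ⟩ => by
    obtain ⟨Y₀, P₀, i₀, p₀, δ₀, hT₀, hP₀, hY₀⟩ := exists_cover_of_mem_V_succ hP n hW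
    obtain ⟨E, g, h, hTE⟩ := distinguished_cocone_triangle (p₀ ≫ u)
    -- The octahedron on `P₀ ⟶ W ⟶ X` gives a triangle `Y₀⟦1⟧ ⟶ E ⟶ Z ⟶ Y₀⟦2⟧`.
    have oct := Triangulated.someOctahedron rfl (rot_of_distTriang _ hT₀) hT hTE
    refine ⟨E⟦(-1 : ℤ)⟧, P₀, _, _, _, inv_rot_of_distTriang _ hTE, hP₀,
      shift_neg_one_mem_star oct.mem ?_ (shift_neg_one_mem_shiftSet ?_)⟩
    · exact mem_V_of_iso hP n ((shiftFunctorCompIsoId C (1 : ℤ) (-1) (by norm_num)).app Y₀).symm hY₀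
    · simpa using hZ

end Pretriangulated

variable {C : Type u} [Category.{v} C] [HasZeroObject C] [HasShift C ℤ] [Preadditive C]
  [∀ n : ℤ, (shiftFunctor C n).Additive] [Pretriangulated C] [HasBinaryBiproducts C]

theorem statement3_general [IsTriangulated C] (d : ℕ) (P I : Set C) (hIP : I ⊆ P)
    (hPiso : ∀ ⦃X Y : C⦄, (X ≅ Y) → X ∈ P → Y ∈ P)
    (hPzero : ∀ ⦃X : C⦄, IsZero X → X ∈ P)
    (hPconn : ∀ ⦃X Y : C⦄, X ∈ P → Y ∈ P → ∀ n : ℤ, 1 ≤ n → ∀ f : X ⟶ Y⟦n⟧, f = 0)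
    {X : C} (hX : X ∈ V P (d + 1) ∩ extKer I) :
    (∀ Y ∈ V P (d + 1) ∩ extKer I, ∀ f : X ⟶ Y⟦(1 : ℤ)⟧, f = 0) ↔
      (∃ (P' Z : C), P' ∈ P ∧ Nonempty (P' ≅ X ⊞ Z)) := by
  constructor
  · intro hproj
    obtain ⟨Y, P₀, i, p, δ, hT, hP₀, hY⟩ := exists_cover_of_mem_V_succ hPiso d hX.1
    have hYker : Y ∈ extKer I :=
      mem_extKer_of_distTriang hT (fun _ hI' ↦ hPconn hP₀ (hIP hI')) hX.2
    have hδ : δ = 0 := hproj Y ⟨V_subset_V_succ hPzero d hY, hYker⟩ δ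
    obtain ⟨e, -, -⟩ := exists_iso_binaryBiproduct_of_distTriang _ hT hδ
    exact ⟨P₀, Y, hP₀, ⟨e ≪≫ biprod.braiding Y X⟩⟩
  · rintro ⟨P', Z, hP', ⟨e⟩⟩ Y ⟨hY, -⟩ f
    have hP'f : e.hom ≫ biprod.fst ≫ f = 0 :=
      hom_shift_eq_zero_of_mem_V hPconn hP' le_rfl (d + 1) hY _
    calc f = biprod.inl ≫ e.inv ≫ e.hom ≫ biprod.fst ≫ f := by simp
      _ = 0 := by rw [hP'f, comp_zero, comp_zero]

theorem statement3 [IsTriangulated C] (d : ℕ) (hd : 1 ≤ d) (P I : Set C) (hIP : I ⊆ P)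
    (hPiso : ∀ ⦃X Y : C⦄, (X ≅ Y) → X ∈ P → Y ∈ P)
    (hPsum : ∀ ⦃X Y : C⦄, X ∈ P → Y ∈ P → (X ⊞ Y) ∈ P)
    (hPzero : ∀ ⦃X : C⦄, IsZero X → X ∈ P)
    (hPconn : ∀ ⦃X Y : C⦄, X ∈ P → Y ∈ P → ∀ n : ℤ, 1 ≤ n → ∀ f : X ⟶ Y⟦n⟧, f = 0)
    (hIiso : ∀ ⦃X Y : C⦄, (X ≅ Y) → X ∈ I → Y ∈ I)
    (hIsum : ∀ ⦃X Y : C⦄, X ∈ I → Y ∈ I → (X ⊞ Y) ∈ I)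
    (hIzero : ∀ ⦃X : C⦄, IsZero X → X ∈ I)
    {X : C} (hX : X ∈ V P (d + 1) ∩ extKer I) :
    (∀ Y ∈ V P (d + 1) ∩ extKer I, ∀ f : X ⟶ Y⟦(1 : ℤ)⟧, f = 0) ↔
      (∃ (P' Z : C), P' ∈ P ∧ Nonempty (P' ≅ X ⊞ Z)) :=
  statement3_general d P I hIP hPiso hPzero hPconn hX

end AuslanderIyamaStmt3
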